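/- arXiv:2412.04658 — 3 statements merged into one kernel-verified Lean document; each statement's English description precedes it below -/
import Mathlib

section
/- Let h, V : ℝ → ℝ be differentiable, α_x > α ≥ 0, λ ≥ α_x, C, ρ > 0. Suppose for all t ≥ 0: h'(t) ≥ -α·h(t) - (C/ρ)·V(t) and V'(t) ≤ -λ·V(t), with V(t) ≥ 0. Define H(t) = (α_x - α)·h(t) - (C/ρ)·V(t). If H(0) ≥ 0, then H(t) ≥ 0 for all t ≥ 0, and consequently h(t) ≥ 0 for all t ≥ 0. -/
/-!
Differentiating `H = (αx - α) h - (C/ρ) V` and inserting both hypotheses gives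
`H' + α H ≥ (lam - αx) (C/ρ) V ≥ 0`, because `V` decays at rate `lam ≥ αx`.
With the integrating factor `exp (α t)`, the function `exp (α t) H t` is then nondecreasing,
so `H` stays nonnegative; finally `(αx - α) h ≥ (C/ρ) V ≥ 0` forces `h ≥ 0`.
-/

open Set

theorem monotoneOn_exp_mul_of_neg_mul_le_deriv {f : ℝ → ℝ} {k a : ℝ} (hf : Differentiable ℝ f)
    (hf' : ∀ t, a ≤ t → -k * f t ≤ deriv f t) :
    MonotoneOn (fun t => Real.exp (k * t) * f t) (Ici a) := by
  have hderiv : ∀ t, HasDerivAt (fun t => Real.exp (k * t) * f t)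
      (Real.exp (k * t) * (k * f t + deriv f t)) t := by
    intro t
    have hexp : HasDerivAt (fun t => Real.exp (k * t)) (Real.exp (k * t) * k) t := by
      simpa using ((hasDerivAt_id t).const_mul k).exp
    exact (hexp.mul (hf t).hasDerivAt).congr_deriv (by ring)
  have hdiff : Differentiable ℝ (fun t => Real.exp (k * t) * f t) :=
    fun t => (hderiv t).differentiableAt
  refine monotoneOn_of_deriv_nonneg (convex_Ici a) hdiff.continuous.continuousOn
    hdiff.differentiableOn fun t ht => ?_
  rw [interior_Ici] at ht
  rw [(hderiv t).deriv]
  have hft := hf' t ht.le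
  exact mul_nonneg (Real.exp_pos _).le (by linarith)

theorem nonneg_of_neg_mul_le_deriv {f : ℝ → ℝ} {k a : ℝ} (hf : Differentiable ℝ f)
    (hf' : ∀ t, a ≤ t → -k * f t ≤ deriv f t) (ha : 0 ≤ f a) {t : ℝ} (ht : a ≤ t) :
    0 ≤ f t := by
  have hmono : Real.exp (k * a) * f a ≤ Real.exp (k * t) * f t :=
    monotoneOn_exp_mul_of_neg_mul_le_deriv hf hf' self_mem_Ici ht ht
  exact nonneg_of_mul_nonneg_right (le_trans (by positivity) hmono) (Real.exp_pos (k * t))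

theorem stmt_2_general (h V : ℝ → ℝ) (α αx lam C ρ : ℝ)
    (hh : Differentiable ℝ h) (hV : Differentiable ℝ V)
    (hαx : α < αx) (hlam : αx ≤ lam)
    (hC : 0 < C) (hρ : 0 < ρ)
    (hVpos : ∀ t : ℝ, 0 ≤ t → 0 ≤ V t)
    (hhineq : ∀ t : ℝ, 0 ≤ t → -α * h t - (C / ρ) * V t ≤ deriv h t)
    (hVineq : ∀ t : ℝ, 0 ≤ t → deriv V t ≤ -lam * V t)
    (hH0 : 0 ≤ (αx - α) * h 0 - (C / ρ) * V 0) :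
    (∀ t : ℝ, 0 ≤ t → 0 ≤ (αx - α) * h t - (C / ρ) * V t) ∧
    (∀ t : ℝ, 0 ≤ t → 0 ≤ h t) := by
  set H : ℝ → ℝ := fun t => (αx - α) * h t - (C / ρ) * V t
  have hc : 0 ≤ C / ρ := (div_pos hC hρ).le
  have hHdiff : Differentiable ℝ H := (hh.const_mul _).sub (hV.const_mul _)
  have hH' : ∀ t, 0 ≤ t → -α * H t ≤ deriv H t := by
    intro t ht
    have hderiv : deriv H t = (αx - α) * deriv h t - (C / ρ) * deriv V t :=
      (((hh t).hasDerivAt.const_mul _).sub ((hV t).hasDerivAt.const_mul _)).deriv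
    rw [hderiv]
    linarith [mul_le_mul_of_nonneg_left (hhineq t ht) (sub_nonneg.2 hαx.le),
      mul_le_mul_of_nonneg_left (hVineq t ht) hc,
      mul_nonneg (mul_nonneg hc (hVpos t ht)) (sub_nonneg.2 hlam)]
  have hH : ∀ t, 0 ≤ t → 0 ≤ H t := fun t ht => nonneg_of_neg_mul_le_deriv hHdiff hH' hH0 ht
  refine ⟨hH, fun t ht => ?_⟩
  have hVt : 0 ≤ (C / ρ) * V t := mul_nonneg hc (hVpos t ht)
  exact nonneg_of_mul_nonneg_right (by linarith [hH t ht]) (sub_pos.2 hαx)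

/-- Scalar core of the layered safety theorem: if `h' ≥ -α h - (C/ρ) V`,
`V' ≤ -λ V`, `V ≥ 0`, with `α_x > α ≥ 0`, `λ ≥ α_x`, `C, ρ > 0`, then
`H(t) = (α_x - α) h(t) - (C/ρ) V(t)` with `H(0) ≥ 0` stays nonnegative,
and consequently `h(t) ≥ 0` for all `t ≥ 0`. -/
theorem stmt_2 (h V : ℝ → ℝ) (α αx lam C ρ : ℝ)
    (hh : Differentiable ℝ h) (hV : Differentiable ℝ V)
    (hα : 0 ≤ α) (hαx : α < αx) (hlam : αx ≤ lam)
    (hC : 0 < C) (hρ : 0 < ρ)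
    (hVpos : ∀ t : ℝ, 0 ≤ t → 0 ≤ V t)
    (hhineq : ∀ t : ℝ, 0 ≤ t → -α * h t - (C / ρ) * V t ≤ deriv h t)
    (hVineq : ∀ t : ℝ, 0 ≤ t → deriv V t ≤ -lam * V t)
    (hH0 : 0 ≤ (αx - α) * h 0 - (C / ρ) * V 0) :
    (∀ t : ℝ, 0 ≤ t → 0 ≤ (αx - α) * h t - (C / ρ) * V t) ∧
    (∀ t : ℝ, 0 ≤ t → 0 ≤ h t) :=
  stmt_2_general h V α αx lam C ρ hh hV hαx hlam hC hρ hVpos hhineq hVineq hH0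
end

section
/- Let h, V : ℝ → ℝ be differentiable, α_x > α ≥ 0, λ ≥ α_x, C, ρ > 0, μ ≥ 0, and δ₀ ≥ C·μ/(α_x·ρ). Suppose for all t ≥ 0: h'(t) ≥ -α·h(t) + δ₀ - (C/ρ)·V(t), V(t) ≥ 0, and V'(t) ≤ -λ·V(t) + μ. Define H(t) = (α_x - α)·h(t) + δ₀ - (C/ρ)·V(t). Then H'(t) ≥ -α·H(t) for all t ≥ 0; hence if H(0) ≥ 0 then H(t) ≥ 0 for all t ≥ 0. -/
/-!
Differentiating `H = (α_x - α) h + δ₀ - (C/ρ) V` and inserting the bounds on `h'` and `V'` gives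
`H' + α H ≥ α_x δ₀ - (C/ρ) μ + (C/ρ)(λ - α_x) V`, which is nonnegative because `δ₀` was chosen
with `α_x δ₀ ≥ C μ / ρ`, `λ ≥ α_x` and `V ≥ 0`. The comparison `H' ≥ -α H` then makes
`t ↦ exp (α t) H(t)` nondecreasing on `[0, ∞)`, so `H` stays nonnegative once `H(0) ≥ 0`.
-/

open Real Set

lemma neg_mul_barrier_le_deriv {α αx lam k mu δ₀ h V h' V' : ℝ}
    (hαx : α ≤ αx) (hlam : αx ≤ lam) (hk : 0 ≤ k) (hkmu : k * mu ≤ αx * δ₀) (hV : 0 ≤ V)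
    (hh' : -α * h + δ₀ - k * V ≤ h') (hV' : V' ≤ -lam * V + mu) :
    -α * ((αx - α) * h + δ₀ - k * V) ≤ (αx - α) * h' - k * V' := by
  have hh'_scaled := mul_le_mul_of_nonneg_left hh' (sub_nonneg.mpr hαx)
  have hV'_scaled := mul_le_mul_of_nonneg_left hV' hk
  have hkV := mul_nonneg (mul_nonneg hk hV) (sub_nonneg.mpr hlam)
  linarith

lemma monotoneOn_exp_mul_of_neg_mul_le_deriv_s3 {H : ℝ → ℝ} {α : ℝ} (hH : Differentiable ℝ H)
    (hderiv : ∀ t, 0 ≤ t → -α * H t ≤ deriv H t) :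
    MonotoneOn (fun t => exp (α * t) * H t) (Ici 0) := by
  have hG : ∀ t, HasDerivAt (fun t => exp (α * t) * H t)
      (exp (α * t) * (α * H t + deriv H t)) t := fun t => by
    refine ((((hasDerivAt_id t).const_mul α).exp).mul (hH t).hasDerivAt).congr_deriv ?_
    simp only [id_eq, mul_one]
    ring
  refine monotoneOn_of_deriv_nonneg (convex_Ici 0)
    (fun t _ => (hG t).continuousAt.continuousWithinAt)
    (fun t _ => (hG t).differentiableAt.differentiableWithinAt) fun t ht => ?_
  rw [interior_Ici] at ht
  rw [(hG t).deriv]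
  have hcomparison := hderiv t ht.le
  exact mul_nonneg (exp_pos _).le (by linarith)

lemma nonneg_of_neg_mul_le_deriv_s3 {H : ℝ → ℝ} {α : ℝ} (hH : Differentiable ℝ H)
    (hderiv : ∀ t, 0 ≤ t → -α * H t ≤ deriv H t) (h0 : 0 ≤ H 0) {t : ℝ} (ht : 0 ≤ t) :
    0 ≤ H t := by
  have hmono := monotoneOn_exp_mul_of_neg_mul_le_deriv_s3 hH hderiv self_mem_Ici ht ht
  simp only [mul_zero, exp_zero, one_mul] at hmono
  exact nonneg_of_mul_nonneg_right (h0.trans hmono) (exp_pos _)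

theorem stmt_3_general (h V : ℝ → ℝ) (α αx lam C ρ mu δ₀ : ℝ)
    (hh : Differentiable ℝ h) (hV : Differentiable ℝ V)
    (hα : 0 ≤ α) (hαx : α < αx) (hlam : αx ≤ lam)
    (hC : 0 < C) (hρ : 0 < ρ)
    (hδ₀ : C * mu / (αx * ρ) ≤ δ₀)
    (hhineq : ∀ t : ℝ, 0 ≤ t → -α * h t + δ₀ - (C / ρ) * V t ≤ deriv h t)
    (hVpos : ∀ t : ℝ, 0 ≤ t → 0 ≤ V t)
    (hVineq : ∀ t : ℝ, 0 ≤ t → deriv V t ≤ -lam * V t + mu) :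
    (∀ t : ℝ, 0 ≤ t →
      -α * ((αx - α) * h t + δ₀ - (C / ρ) * V t) ≤
        deriv (fun s => (αx - α) * h s + δ₀ - (C / ρ) * V s) t) ∧
    (0 ≤ (αx - α) * h 0 + δ₀ - (C / ρ) * V 0 →
      ∀ t : ℝ, 0 ≤ t → 0 ≤ (αx - α) * h t + δ₀ - (C / ρ) * V t) := by
  have hαx0 : 0 < αx := hα.trans_lt hαx
  have hkmu : C / ρ * mu ≤ αx * δ₀ := by
    rw [div_mul_eq_mul_div]
    rwa [mul_comm αx ρ, ← div_div, div_le_iff₀' hαx0] at hδ₀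
  have hHderiv : ∀ t, HasDerivAt (fun s => (αx - α) * h s + δ₀ - (C / ρ) * V s)
      ((αx - α) * deriv h t - (C / ρ) * deriv V t) t := fun t =>
    (((hh t).hasDerivAt.const_mul _).add_const δ₀).sub ((hV t).hasDerivAt.const_mul _)
  have hderiv : ∀ t : ℝ, 0 ≤ t → -α * ((αx - α) * h t + δ₀ - (C / ρ) * V t) ≤
      deriv (fun s => (αx - α) * h s + δ₀ - (C / ρ) * V s) t := fun t ht => by
    rw [(hHderiv t).deriv]
    exact neg_mul_barrier_le_deriv hαx.le hlam (by positivity) hkmu (hVpos t ht)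
      (hhineq t ht) (hVineq t ht)
  exact ⟨hderiv, fun h0 _ ht =>
    nonneg_of_neg_mul_le_deriv_s3 (fun t => (hHderiv t).differentiableAt) hderiv h0 ht⟩

/-- Key differential inequality in the existence proof for predictive CBFs:
with `δ₀ ≥ Cμ/(α_x ρ)` and `h' ≥ -α h + δ₀ - (C/ρ) V`, `V ≥ 0`,
`V' ≤ -λ V + μ`, the function `H(t) = (α_x - α) h(t) + δ₀ - (C/ρ) V(t)`
satisfies `H'(t) ≥ -α H(t)`; hence `H(0) ≥ 0` implies `H(t) ≥ 0` for `t ≥ 0`. -/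
theorem stmt_3 (h V : ℝ → ℝ) (α αx lam C ρ mu δ₀ : ℝ)
    (hh : Differentiable ℝ h) (hV : Differentiable ℝ V)
    (hα : 0 ≤ α) (hαx : α < αx) (hlam : αx ≤ lam)
    (hC : 0 < C) (hρ : 0 < ρ) (hmu : 0 ≤ mu)
    (hδ₀ : C * mu / (αx * ρ) ≤ δ₀)
    (hhineq : ∀ t : ℝ, 0 ≤ t → -α * h t + δ₀ - (C / ρ) * V t ≤ deriv h t)
    (hVpos : ∀ t : ℝ, 0 ≤ t → 0 ≤ V t)
    (hVineq : ∀ t : ℝ, 0 ≤ t → deriv V t ≤ -lam * V t + mu) :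
    (∀ t : ℝ, 0 ≤ t →
      -α * ((αx - α) * h t + δ₀ - (C / ρ) * V t) ≤
        deriv (fun s => (αx - α) * h s + δ₀ - (C / ρ) * V s) t) ∧
    (0 ≤ (αx - α) * h 0 + δ₀ - (C / ρ) * V 0 →
      ∀ t : ℝ, 0 ≤ t → 0 ≤ (αx - α) * h t + δ₀ - (C / ρ) * V t) :=
  stmt_3_general h V α αx lam C ρ mu δ₀ hh hV hα hαx hlam hC hρ hδ₀ hhineq hVpos hVineq
end

section
/- Let h : ℝⁿ → ℝ and Π, Ψ as above with |L_g h(Π(x))| ≤ C for all x in the safe set, and let ρ > 0 with ρ·|Ψ(x) - k(Π(x))| ≤ V(x). If the filtered input satisfies L_f h(z) + L_g h(z)·k(z) ≥ -α·h(z) + δ₀ at z = Π(x), then d/dt h(Π(x(t))) ≥ -α·h(Π(x(t))) + δ₀ - (C/ρ)·V(x(t)) along the closed-loop trajectory. -/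
/-- Key lower bound in the proof of Theorem 3: with `‖L_g h(Π x)‖ ≤ C`,
`ρ ‖Ψ x - k(Π x)‖ ≤ V x`, and the filtered input satisfying the robustified
CBF constraint `L_f h(z) + L_g h(z) k(z) ≥ -α h(z) + δ₀` at `z = Π x`,
the barrier derivative along the closed-loop trajectory satisfies
`d/dt h(Π(x(t))) ≥ -α h(Π(x(t))) + δ₀ - (C/ρ) V(x(t))`. -/
theorem stmt_19 (N n M m : ℕ) (α δ₀ C ρ : ℝ)
    (hα : 0 ≤ α) (hρ : 0 < ρ)
    (F : (Fin N → ℝ) → (Fin N → ℝ))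
    (G : (Fin N → ℝ) → ((Fin M → ℝ) →L[ℝ] (Fin N → ℝ)))
    (f : (Fin n → ℝ) → (Fin n → ℝ))
    (g : (Fin n → ℝ) → ((Fin m → ℝ) →L[ℝ] (Fin n → ℝ)))
    (Ψ : (Fin N → ℝ) → (Fin m → ℝ))
    (k : (Fin n → ℝ) → (Fin m → ℝ))
    (V : (Fin N → ℝ) → ℝ)
    (Pi : (Fin N → ℝ) → (Fin n → ℝ)) (hPi : Differentiable ℝ Pi)
    (h : (Fin n → ℝ) → ℝ) (hhd : Differentiable ℝ h)
    (hmatch : ∀ x, fderiv ℝ Pi x (F x) = f (Pi x) + g (Pi x) (Ψ x))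
    (hannih : ∀ x u, fderiv ℝ Pi x (G x u) = 0)
    (hCbound : ∀ x : Fin N → ℝ,
      ‖(fderiv ℝ h (Pi x)).comp (g (Pi x))‖ ≤ C)
    (htrack : ∀ x : Fin N → ℝ, ρ * ‖Ψ x - k (Pi x)‖ ≤ V x)
    (hcbf : ∀ x : Fin N → ℝ,
      fderiv ℝ h (Pi x) (f (Pi x)) + fderiv ℝ h (Pi x) (g (Pi x) (k (Pi x)))
        ≥ -α * h (Pi x) + δ₀)
    (x : ℝ → (Fin N → ℝ)) (u : ℝ → (Fin M → ℝ))
    (hx : ∀ t : ℝ, HasDerivAt x (F (x t) + G (x t) (u t)) t) :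
    ∀ t : ℝ,
      -α * h (Pi (x t)) + δ₀ - (C / ρ) * V (x t) ≤
        deriv (fun s => h (Pi (x s))) t := by
  intro t
  set z := Pi (x t) with hz
  have hder : HasDerivAt (fun s => h (Pi (x s)))
      (fderiv ℝ h z (fderiv ℝ Pi (x t) (F (x t) + G (x t) (u t)))) t := by
    have h1 : HasDerivAt (fun s => Pi (x s))
        (fderiv ℝ Pi (x t) (F (x t) + G (x t) (u t))) t :=
      (hPi (x t)).hasFDerivAt.comp_hasDerivAt t (hx t)
    exact ((hhd z).hasFDerivAt.comp_hasDerivAt t h1)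
  rw [hder.deriv]
  have hlin : fderiv ℝ Pi (x t) (F (x t) + G (x t) (u t))
      = f z + g z (Ψ (x t)) := by
    rw [map_add, hmatch, hannih, add_zero]
  rw [hlin]
  have hsplit : fderiv ℝ h z (f z + g z (Ψ (x t)))
      = fderiv ℝ h z (f z) + fderiv ℝ h z (g z (k z))
        + ((fderiv ℝ h z).comp (g z)) (Ψ (x t) - k z) := by
    simp [map_add, map_sub]
  rw [hsplit]
  have hC0 : 0 ≤ C := le_trans (norm_nonneg _) (hCbound (x t))
  have hbnd : ‖((fderiv ℝ h z).comp (g z)) (Ψ (x t) - k z)‖ ≤ (C / ρ) * V (x t) := by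
    calc ‖((fderiv ℝ h z).comp (g z)) (Ψ (x t) - k z)‖
        ≤ ‖(fderiv ℝ h z).comp (g z)‖ * ‖Ψ (x t) - k z‖ :=
          ContinuousLinearMap.le_opNorm _ _
      _ ≤ C * ‖Ψ (x t) - k z‖ :=
          mul_le_mul_of_nonneg_right (hCbound (x t)) (norm_nonneg _)
      _ ≤ C * (V (x t) / ρ) := by
          apply mul_le_mul_of_nonneg_left _ hC0
          rw [le_div_iff₀ hρ, mul_comm]
          exact htrack (x t)
      _ = (C / ρ) * V (x t) := by ring
  have h2 : -((C / ρ) * V (x t)) ≤ ((fderiv ℝ h z).comp (g z)) (Ψ (x t) - k z) :=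
    neg_le_of_abs_le (by rwa [Real.norm_eq_abs] at hbnd)
  have := hcbf (x t)
  linarith
end
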